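/- Let k ≥ 2 and let x and y be binary strings of the same length satisfying B^(k−1)(x) = B^(k−1)(y), B_L^(k−1)(x) = B_L^(k−1)(y), B_R^(k−1)(x) = B_R^(k−1)(y), and B_LR^(k−1)(x) = B_LR^(k−1)(y). Then B^(k)((0, x, 0, 0, y)) = B^(k)((0, y, 0, 0, x)), where (0, x, 0, 0, y) denotes the concatenation of a leading 0 bit, x, two 0 bits, and y. -/
import Mathlib


/-- The multiset of all `s`-gapped subsequences of a binary string (all lengths,
including the empty subsequence), counted with multiplicity over index choices:
consecutive chosen indices must differ by at least `s`. -/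
def gappedSubseqs (s : ℕ) : List Bool → Multiset (List Bool)
  | [] => {[]}
  | a :: l => gappedSubseqs s l + (gappedSubseqs s (l.drop (s - 1))).map (a :: ·)
termination_by x => x.length
decreasing_by
  · simp
  · simp only [List.length_drop, List.length_cons]; omega

/-- The `s`-gapped `k`-deck: all `s`-gapped subsequences of length between 1 and `k`. -/
def gDeck (s k : ℕ) (x : List Bool) : Multiset (List Bool) :=
  (gappedSubseqs s x).filter (fun w => 1 ≤ w.length ∧ w.length ≤ k)

/-- The exact `s`-gapped `k`-deck: all `s`-gapped subsequences of length exactly `k`. -/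
def dDeck (s k : ℕ) (x : List Bool) : Multiset (List Bool) :=
  (gappedSubseqs s x).filter (fun w => w.length = k)

/-- The classical (ungapped) `k`-deck: the multiset of all length-`k` subsequences. -/
def deck (k : ℕ) (x : List Bool) : Multiset (List Bool) :=
  (gappedSubseqs 1 x).filter (fun w => w.length = k)

/-- The gapped `k`-deck `B^(k)` (gap `2`). -/
def Bdeck (k : ℕ) (x : List Bool) : Multiset (List Bool) := gDeck 2 k x

/-- `B_L^(k)`: the gapped `k`-deck of the string punctured on the left. -/
def BLdeck (k : ℕ) (x : List Bool) : Multiset (List Bool) := Bdeck k x.tail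

/-- `B_R^(k)`: the gapped `k`-deck of the string punctured on the right. -/
def BRdeck (k : ℕ) (x : List Bool) : Multiset (List Bool) := Bdeck k x.dropLast

/-- `B_LR^(k)`: the gapped `k`-deck of the string punctured on both ends. -/
def BLRdeck (k : ℕ) (x : List Bool) : Multiset (List Bool) := Bdeck k x.tail.dropLast

/-- `S(k)`: the smallest positive `n` such that two distinct binary strings of
length `n` share the same `k`-deck. -/
noncomputable def Sval (k : ℕ) : ℕ :=
  sInf {n | 0 < n ∧ ∃ x y : List Bool, x.length = n ∧ y.length = n ∧ x ≠ y ∧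
    deck k x = deck k y}

/-- `G(k)`: the smallest positive `n` such that two distinct binary strings of
length `n` share the same gapped `k`-deck. -/
noncomputable def Gval (k : ℕ) : ℕ :=
  sInf {n | 0 < n ∧ ∃ x y : List Bool, x.length = n ∧ y.length = n ∧ x ≠ y ∧
    Bdeck k x = Bdeck k y}

/-- `G_s(k)`: the smallest positive `n` such that two distinct binary strings of
length `n` share the same `s`-gapped `k`-deck. -/
noncomputable def Gs (s k : ℕ) : ℕ :=
  sInf {n | 0 < n ∧ ∃ x y : List Bool, x.length = n ∧ y.length = n ∧ x ≠ y ∧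
    gDeck s k x = gDeck s k y}

/-- `G*(k)`: the smallest positive `n` such that two distinct binary strings of
length `n` share the same gapped `k`-deck, also after puncturing on the left,
right and both sides. -/
noncomputable def Gstar (k : ℕ) : ℕ :=
  sInf {n | 0 < n ∧ ∃ x y : List Bool, x.length = n ∧ y.length = n ∧ x ≠ y ∧
    Bdeck k x = Bdeck k y ∧ BLdeck k x = BLdeck k y ∧
    BRdeck k x = BRdeck k y ∧ BLRdeck k x = BLRdeck k y}

mutual
/-- Morse-Thue string `x^(k+1)` (index shifted: `mtX 0 = x^(1) = (0,1)`). -/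
def mtX : ℕ → List Bool
  | 0 => [false, true]
  | k + 1 => mtX k ++ mtY k
/-- Morse-Thue string `y^(k+1)` (index shifted: `mtY 0 = y^(1) = (1,0)`). -/
def mtY : ℕ → List Bool
  | 0 => [true, false]
  | k + 1 => mtY k ++ mtX k
end

mutual
/-- Padded Morse-Thue string `x^(k+1)` (index shifted: `px 0 = x^(1) = (0,0,1,0)`). -/
def px : ℕ → List Bool
  | 0 => [false, false, true, false]
  | k + 1 => [false] ++ px k ++ [false, false] ++ py k ++ [false]
/-- Padded Morse-Thue string `y^(k+1)` (index shifted: `py 0 = y^(1) = (0,1,0,0)`). -/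
def py : ℕ → List Bool
  | 0 => [false, true, false, false]
  | k + 1 => [false] ++ py k ++ [false, false] ++ px k ++ [false]
end

/-- Interleaving `(z₁,x₁,z₂,x₂,…,z_{k-1},x_{k-1},z_k)` of `z` and `x`
(used with `|z| = |x| + 1`). -/
def interleave : List Bool → List Bool → List Bool
  | z, [] => z
  | [], _ :: _ => []
  | a :: l, b :: m => a :: b :: interleave l m

/-- `N(w, p)`: the number of occurrences of the wildcard string `w`
(entries `none` are wildcards `J`, `some b` is a letter of `Γ = {X, Y}`)
as a subsequence of `p`, each wildcard matching either letter. -/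
def Nw : List (Option Bool) → List Bool → ℕ
  | [], _ => 1
  | _ :: _, [] => 0
  | a :: w, b :: p =>
      Nw (a :: w) p + if a = none ∨ a = some b then Nw w p else 0

/-- `U_r(k)`: wildcard strings of length between `r` and `k` with exactly `r`
non-wildcard symbols. -/
def Ur (r k : ℕ) : Set (List (Option Bool)) :=
  {w | r ≤ w.length ∧ w.length ≤ k ∧ w.countP (fun a => a.isSome) = r}

/-- `U(k₁, k₂) = U₁(k₁) ∪ U₂(k₂)`. -/
def Uset (k1 k2 : ℕ) : Set (List (Option Bool)) := Ur 1 k1 ∪ Ur 2 k2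

/-- `p ∼^{U(k₁,k₂)} q`: `N(w,p) = N(w,q)` for all `w ∈ U(k₁,k₂)`. -/
def equivU (k1 k2 : ℕ) (p q : List Bool) : Prop :=
  ∀ w ∈ Uset k1 k2, Nw w p = Nw w q

/-- `S_U(k₁,k₂)`: the smallest `m` for which two distinct strings
`p, q ∈ Γ^m` satisfy `p ∼^{U(k₁,k₂)} q`. -/
noncomputable def SU (k1 k2 : ℕ) : ℕ :=
  sInf {m | ∃ p q : List Bool, p.length = m ∧ q.length = m ∧ p ≠ q ∧
    equivU k1 k2 p q}

/-- `h_{x,y}(p)`: replace each letter of `p` (`false = X`, `true = Y`) by `x`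
resp. `y` padded with one `0` at each end. -/
def hxy (x y : List Bool) (p : List Bool) : List Bool :=
  (p.map (fun b => [false] ++ (if b then y else x) ++ [false])).flatten

lemma g2_nil : gappedSubseqs 2 [] = {[]} := by rw [gappedSubseqs]

lemma g2_cons (a : Bool) (l : List Bool) :
    gappedSubseqs 2 (a :: l) =
      gappedSubseqs 2 l + (gappedSubseqs 2 l.tail).map (a :: ·) := by
  rw [gappedSubseqs]
  simp [List.drop_one]

lemma count_nil_g2 (l : List Bool) : (gappedSubseqs 2 l).count [] = 1 := by
  induction l with
  | nil => rw [g2_nil]; rfl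
  | cons a l ih =>
    rw [g2_cons, Multiset.count_add, ih, Multiset.count_eq_zero_of_notMem (by simp)]

/-- append-convolution of multisets of lists -/
def conv (A B : Multiset (List Bool)) : Multiset (List Bool) :=
  A.bind fun a => B.map (a ++ ·)

lemma conv_zero_left (B) : conv 0 B = 0 := rfl

lemma conv_cons (a : List Bool) (A B) :
    conv (a ::ₘ A) B = B.map (a ++ ·) + conv A B := by
  simp [conv, Multiset.cons_bind]

lemma conv_add_left (A A' B) : conv (A + A') B = conv A B + conv A' B := by
  simp [conv, Multiset.add_bind]

lemma conv_singleton_nil_left (B) : conv {[]} B = B := by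
  simp [conv]

lemma conv_map_cons (a : Bool) (A B) :
    conv (A.map (a :: ·)) B = (conv A B).map (a :: ·) := by
  simp [conv, Multiset.bind_map, Multiset.map_bind, Multiset.map_map, Function.comp]

lemma count_map_append (a : List Bool) (B : Multiset (List Bool)) (w : List Bool) :
    (B.map (a ++ ·)).count w = if a <+: w then B.count (w.drop a.length) else 0 := by
  by_cases h : a <+: w
  · obtain ⟨t, rfl⟩ := h
    rw [if_pos (by exact ⟨t, rfl⟩), List.drop_left]
    exact Multiset.count_map_eq_count' _ _ (fun _ _ h => List.append_cancel_left h) _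
  · rw [if_neg h, Multiset.count_eq_zero]
    intro hw
    obtain ⟨t, _, rfl⟩ := Multiset.mem_map.mp hw
    exact h ⟨t, rfl⟩

lemma sum_take_ite (a w : List Bool) (g : ℕ → ℕ) :
    (∑ i ∈ Finset.range (w.length + 1), if w.take i = a then g i else 0) =
      if a <+: w then g a.length else 0 := by
  by_cases h : a <+: w
  · rw [if_pos h]
    have hlen : a.length ≤ w.length := h.length_le
    rw [Finset.sum_eq_single_of_mem a.length (Finset.mem_range.mpr (by omega))]
    · rw [if_pos]
      exact (List.prefix_iff_eq_take.mp h).symm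
    · intro i hi hne
      rw [if_neg]
      intro he
      apply hne
      have : (w.take i).length = i := by
        rw [List.length_take]; have := Finset.mem_range.mp hi; omega
      rw [he] at this
      omega
  · rw [if_neg h]
    apply Finset.sum_eq_zero
    intro i _
    rw [if_neg]
    intro he
    exact h (he ▸ List.take_prefix i w)

lemma count_conv (A B : Multiset (List Bool)) (w : List Bool) :
    (conv A B).count w =
      ∑ i ∈ Finset.range (w.length + 1), A.count (w.take i) * B.count (w.drop i) := by
  induction A using Multiset.induction_on with
  | empty => simp [conv_zero_left]
  | cons a A ih =>
    rw [conv_cons, Multiset.count_add, ih, count_map_append]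
    have : ∀ i ∈ Finset.range (w.length + 1),
        (a ::ₘ A).count (w.take i) * B.count (w.drop i) =
          A.count (w.take i) * B.count (w.drop i) +
            (if w.take i = a then B.count (w.drop i) else 0) := by
      intro i _
      rw [Multiset.count_cons]
      split <;> ring
    rw [Finset.sum_congr rfl this, Finset.sum_add_distrib,
      sum_take_ite a w (fun i => B.count (w.drop i))]
    split <;> omega

/-- gapped subsequences using the last index -/
def lastG : List Bool → Multiset (List Bool)
  | [] => 0
  | [c] => {[c]}
  | a :: b :: l => lastG (b :: l) + (lastG l).map (a :: ·)

/-- gapped subsequences using the first index -/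
def headG : List Bool → Multiset (List Bool)
  | [] => 0
  | b :: v => (gappedSubseqs 2 v.tail).map (b :: ·)

lemma headG_decomp (v : List Bool) :
    gappedSubseqs 2 v = gappedSubseqs 2 v.tail + headG v := by
  cases v with
  | nil => simp [headG, g2_nil]
  | cons b v => rw [g2_cons]; rfl

lemma split_g2 (u v : List Bool) :
    gappedSubseqs 2 (u ++ v) + conv (lastG u) (headG v) =
      conv (gappedSubseqs 2 u) (gappedSubseqs 2 v) := by
  induction u using lastG.induct with
  | case1 => simp [lastG, conv_zero_left, conv_singleton_nil_left, g2_nil]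
  | case2 c =>
    have h1 : gappedSubseqs 2 [c] = ([] : List Bool) ::ₘ {[c]} := by
      rw [g2_cons]; simp only [List.tail_nil, g2_nil]; rfl
    rw [List.singleton_append, g2_cons, h1, conv_cons]
    have h2 : conv ({[c]} : Multiset (List Bool)) (headG v) =
        (headG v).map (c :: ·) := by
      simp [conv]
    have h3 : Multiset.map (fun x => [] ++ x) (gappedSubseqs 2 v) = gappedSubseqs 2 v := by
      simp
    rw [lastG, h2, h3]
    have := congrArg (Multiset.map (c :: ·)) (headG_decomp v)
    rw [Multiset.map_add] at this
    have hc : conv ({[c]} : Multiset (List Bool)) (gappedSubseqs 2 v) =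
        (gappedSubseqs 2 v).map (c :: ·) := by simp [conv]
    rw [hc]
    calc gappedSubseqs 2 v + Multiset.map (c :: ·) (gappedSubseqs 2 v.tail) +
          Multiset.map (c :: ·) (headG v)
        = gappedSubseqs 2 v + (Multiset.map (c :: ·) (gappedSubseqs 2 v.tail) +
          Multiset.map (c :: ·) (headG v)) := by rw [add_assoc]
      _ = gappedSubseqs 2 v + Multiset.map (c :: ·) (gappedSubseqs 2 v) := by rw [← this]
  | case3 a b l ih1 ih2 =>
    have e1 : (a :: b :: l) ++ v = a :: ((b :: l) ++ v) := rfl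
    rw [e1, g2_cons]
    have e2 : ((b :: l) ++ v).tail = l ++ v := rfl
    rw [e2, lastG, conv_add_left, conv_map_cons]
    have e3 : (gappedSubseqs 2 (a :: b :: l)) =
        gappedSubseqs 2 (b :: l) + (gappedSubseqs 2 l).map (a :: ·) := by
      rw [g2_cons]; rfl
    rw [e3, conv_add_left, conv_map_cons, ← ih1, ← ih2]
    rw [Multiset.map_add]
    abel

lemma count_map_cons_nil (b : Bool) (M : Multiset (List Bool)) :
    (M.map (b :: ·)).count [] = 0 := by
  rw [Multiset.count_eq_zero]; simp

lemma count_map_cons_cons (b : Bool) (M : Multiset (List Bool)) (a : Bool) (w : List Bool) :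
    (M.map (b :: ·)).count (a :: w) = if a = b then M.count w else 0 := by
  by_cases h : a = b
  · subst h
    rw [if_pos rfl]
    exact Multiset.count_map_eq_count' _ _ (fun _ _ h => by simpa using h) _
  · rw [if_neg h, Multiset.count_eq_zero]
    intro hw
    obtain ⟨t, _, ht⟩ := Multiset.mem_map.mp hw
    exact h (by simpa using (List.cons_eq_cons.mp ht).1.symm)

lemma count_map_concat (c : Bool) (M : Multiset (List Bool)) (w : List Bool) :
    (M.map (· ++ [c])).count w =
      if w.getLast? = some c then M.count w.dropLast else 0 := by
  rcases List.eq_nil_or_concat w with rfl | ⟨t, d, rfl⟩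
  · simp [Multiset.count_eq_zero]
  · simp only [List.concat_eq_append]
    by_cases h : d = c
    · rw [h]
      have hd : (t ++ [c]).dropLast = t := by simp
      rw [if_pos (by simp), hd]
      exact Multiset.count_map_eq_count' _ _
        (fun _ _ h => by simpa using List.append_cancel_right h) _
    · rw [if_neg (by simp [h]), Multiset.count_eq_zero]
      intro hw
      obtain ⟨t', _, ht⟩ := Multiset.mem_map.mp hw
      have := congrArg List.getLast? ht
      simp at this
      exact h this.symm

lemma tail_dropLast (l : List Bool) : l.tail.dropLast = l.dropLast.tail := by
  cases l with
  | nil => rfl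
  | cons a m =>
    cases m with
    | nil => rfl
    | cons b m' => simp

lemma g2_concat (l : List Bool) (c : Bool) :
    gappedSubseqs 2 (l ++ [c]) =
      gappedSubseqs 2 l + (gappedSubseqs 2 l.dropLast).map (· ++ [c]) := by
  induction l using lastG.induct with
  | case1 => rw [List.nil_append, g2_cons]; simp [g2_nil]
  | case2 a =>
    show gappedSubseqs 2 [a, c] =
      gappedSubseqs 2 [a] + Multiset.map (· ++ [c]) (gappedSubseqs 2 [])
    simp [g2_cons, g2_nil]
    exact Multiset.cons_swap _ _ _
  | case3 a b l ih1 ih2 =>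
    have e1 : (a :: b :: l) ++ [c] = a :: ((b :: l) ++ [c]) := rfl
    rw [e1, g2_cons a ((b :: l) ++ [c])]
    have e2 : ((b :: l) ++ [c]).tail = l ++ [c] := rfl
    rw [e2, ih1, ih2]
    have e3 : (a :: b :: l).dropLast = a :: (b :: l).dropLast := by simp
    rw [g2_cons a (b :: l), e3, g2_cons a ((b :: l).dropLast), List.tail_cons]
    have e5 : (b :: l).dropLast.tail = l.dropLast := by rw [← tail_dropLast]; rfl
    rw [e5]
    simp only [Multiset.map_add, Multiset.map_map]
    have efun : ((fun x => a :: x) ∘ fun x => x ++ [c]) =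
        ((fun x => x ++ [c]) ∘ fun (x : List Bool) => a :: x) := rfl
    rw [efun]
    abel

lemma lastG_concat (l : List Bool) (c : Bool) :
    lastG (l ++ [c]) = (gappedSubseqs 2 l.dropLast).map (· ++ [c]) := by
  induction l using lastG.induct with
  | case1 => simp [lastG, g2_nil]
  | case2 a =>
    show lastG [a, c] = _
    rw [lastG]
    simp [lastG, g2_nil]
  | case3 a b l ih1 ih2 =>
    rcases l with _ | ⟨d, l'⟩
    · show lastG [a, b, c] = Multiset.map (· ++ [c]) (gappedSubseqs 2 [a])
      simp [lastG, g2_cons, g2_nil]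
    · have e1 : (a :: b :: d :: l') ++ [c] = a :: b :: ((d :: l') ++ [c]) := rfl
      rw [e1, lastG]
      have e2' : (b :: ((d :: l') ++ [c])) = (b :: d :: l') ++ [c] := rfl
      rw [e2', ih1, ih2]
      have e3 : (a :: b :: d :: l').dropLast = a :: (b :: d :: l').dropLast := by simp
      rw [e3, g2_cons a ((b :: d :: l').dropLast)]
      have e5 : (b :: d :: l').dropLast.tail = (d :: l').dropLast := by
        rw [← tail_dropLast]; rfl
      rw [e5]
      simp only [Multiset.map_add, Multiset.map_map]
      rfl

lemma count_map_cons_eq (b : Bool) (M N : Multiset (List Bool)) (w : List Bool)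
    (h : M.count w.tail = N.count w.tail) :
    (M.map (b :: ·)).count w = (N.map (b :: ·)).count w := by
  cases w with
  | nil => rw [count_map_cons_nil, count_map_cons_nil]
  | cons a w' =>
    rw [count_map_cons_cons, count_map_cons_cons]
    simp only [List.tail_cons] at h
    split <;> simp [h]

lemma count_map_concat_eq (c : Bool) (M N : Multiset (List Bool)) (w : List Bool)
    (h : M.count w.dropLast = N.count w.dropLast) :
    (M.map (· ++ [c])).count w = (N.map (· ++ [c])).count w := by
  rw [count_map_concat, count_map_concat]
  split <;> simp [h]

lemma dropLast_cons_ne (a : Bool) (l : List Bool) (h : l ≠ []) :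
    (a :: l).dropLast = a :: l.dropLast := by
  cases l with
  | nil => exact absurd rfl h
  | cons b m => simp

section main

variable (k : ℕ) (x y : List Bool)

lemma claimC (hx0 : x ≠ []) (hy0 : y ≠ [])
    (hBc : ∀ w : List Bool, w.length ≤ k - 1 →
      (gappedSubseqs 2 x).count w = (gappedSubseqs 2 y).count w)
    (hLc : ∀ w : List Bool, w.length ≤ k - 1 →
      (gappedSubseqs 2 x.tail).count w = (gappedSubseqs 2 y.tail).count w)
    (hRc : ∀ w : List Bool, w.length ≤ k - 1 →
      (gappedSubseqs 2 x.dropLast).count w = (gappedSubseqs 2 y.dropLast).count w)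
    (hLRc : ∀ w : List Bool, w.length ≤ k - 1 →
      (gappedSubseqs 2 x.tail.dropLast).count w = (gappedSubseqs 2 y.tail.dropLast).count w)
    (w : List Bool) (hw : w.length ≤ k - 1) :
    (gappedSubseqs 2 ((false :: x) ++ [false])).count w =
      (gappedSubseqs 2 ((false :: y) ++ [false])).count w := by
  have ex : (false :: x).dropLast = false :: x.dropLast := dropLast_cons_ne _ _ hx0
  have ey : (false :: y).dropLast = false :: y.dropLast := dropLast_cons_ne _ _ hy0
  rw [g2_concat, g2_concat, ex, ey, g2_cons false x, g2_cons false y,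
    g2_cons false x.dropLast, g2_cons false y.dropLast, ← tail_dropLast, ← tail_dropLast]
  simp only [Multiset.map_add, Multiset.count_add]
  have h1 := hBc w hw
  have h2 := count_map_cons_eq false _ _ w
    (hLc w.tail (by simp [List.length_tail]; omega))
  have h3 := count_map_concat_eq false (gappedSubseqs 2 x.dropLast)
    (gappedSubseqs 2 y.dropLast) w (hRc w.dropLast (by simp [List.length_dropLast]; omega))
  have h4 := count_map_concat_eq false
    ((gappedSubseqs 2 x.tail.dropLast).map (false :: ·))
    ((gappedSubseqs 2 y.tail.dropLast).map (false :: ·)) w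
    (count_map_cons_eq false _ _ w.dropLast
      (hLRc w.dropLast.tail (by simp [List.length_tail, List.length_dropLast]; omega)))
  omega

lemma claimD
    (hBc : ∀ w : List Bool, w.length ≤ k - 1 →
      (gappedSubseqs 2 x).count w = (gappedSubseqs 2 y).count w)
    (hLc : ∀ w : List Bool, w.length ≤ k - 1 →
      (gappedSubseqs 2 x.tail).count w = (gappedSubseqs 2 y.tail).count w)
    (w : List Bool) (hw : w.length ≤ k - 1) :
    (gappedSubseqs 2 (false :: x)).count w = (gappedSubseqs 2 (false :: y)).count w := by
  rw [g2_cons, g2_cons]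
  simp only [Multiset.count_add]
  have h1 := hBc w hw
  have h2 := count_map_cons_eq false _ _ w
    (hLc w.tail (by simp [List.length_tail]; omega))
  omega

lemma claimL (hx0 : x ≠ []) (hy0 : y ≠ [])
    (hRc : ∀ w : List Bool, w.length ≤ k - 1 →
      (gappedSubseqs 2 x.dropLast).count w = (gappedSubseqs 2 y.dropLast).count w)
    (hLRc : ∀ w : List Bool, w.length ≤ k - 1 →
      (gappedSubseqs 2 x.tail.dropLast).count w = (gappedSubseqs 2 y.tail.dropLast).count w)
    (w : List Bool) (hw : w.length ≤ k) :
    (lastG ((false :: x) ++ [false])).count w =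
      (lastG ((false :: y) ++ [false])).count w := by
  have ex : (false :: x).dropLast = false :: x.dropLast := dropLast_cons_ne _ _ hx0
  have ey : (false :: y).dropLast = false :: y.dropLast := dropLast_cons_ne _ _ hy0
  rw [lastG_concat, lastG_concat, ex, ey]
  apply count_map_concat_eq
  rw [g2_cons, g2_cons, ← tail_dropLast, ← tail_dropLast]
  simp only [Multiset.count_add]
  have h1 := hRc w.dropLast (by simp [List.length_dropLast]; omega)
  have h2 := count_map_cons_eq false (gappedSubseqs 2 x.tail.dropLast)
    (gappedSubseqs 2 y.tail.dropLast) w.dropLast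
    (hLRc w.dropLast.tail (by simp [List.length_tail, List.length_dropLast]; omega))
  omega

lemma claimH
    (hLc : ∀ w : List Bool, w.length ≤ k - 1 →
      (gappedSubseqs 2 x.tail).count w = (gappedSubseqs 2 y.tail).count w)
    (w : List Bool) (hw : w.length ≤ k) :
    (headG (false :: x)).count w = (headG (false :: y)).count w := by
  show ((gappedSubseqs 2 x.tail).map (false :: ·)).count w =
    ((gappedSubseqs 2 y.tail).map (false :: ·)).count w
  exact count_map_cons_eq false _ _ w
    (hLc w.tail (by simp [List.length_tail]; omega))

lemma keyC (hk : 2 ≤ k) (hx0 : x ≠ []) (hy0 : y ≠ [])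
    (hRc : ∀ w : List Bool, w.length ≤ k - 1 →
      (gappedSubseqs 2 x.dropLast).count w = (gappedSubseqs 2 y.dropLast).count w)
    (hLRc : ∀ w : List Bool, w.length ≤ k - 1 →
      (gappedSubseqs 2 x.tail.dropLast).count w = (gappedSubseqs 2 y.tail.dropLast).count w)
    (w : List Bool) (hw : w.length ≤ k) :
    (gappedSubseqs 2 ((false :: x) ++ [false])).count w +
      (gappedSubseqs 2 (false :: y)).count w =
    (gappedSubseqs 2 ((false :: y) ++ [false])).count w +
      (gappedSubseqs 2 (false :: x)).count w := by
  have ex : (false :: x).dropLast = false :: x.dropLast := dropLast_cons_ne _ _ hx0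
  have ey : (false :: y).dropLast = false :: y.dropLast := dropLast_cons_ne _ _ hy0
  rw [g2_concat, g2_concat, ex, ey, g2_cons false x, g2_cons false y,
    g2_cons false x.dropLast, g2_cons false y.dropLast, ← tail_dropLast, ← tail_dropLast]
  simp only [Multiset.map_add, Multiset.count_add]
  have h3 := count_map_concat_eq false (gappedSubseqs 2 x.dropLast)
    (gappedSubseqs 2 y.dropLast) w (hRc w.dropLast (by simp [List.length_dropLast]; omega))
  have h4 := count_map_concat_eq false
    ((gappedSubseqs 2 x.tail.dropLast).map (false :: ·))
    ((gappedSubseqs 2 y.tail.dropLast).map (false :: ·)) w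
    (count_map_cons_eq false _ _ w.dropLast
      (hLRc w.dropLast.tail (by simp [List.length_tail, List.length_dropLast]; omega)))
  omega

end main

lemma count_nil_lastG (z : List Bool) : (lastG ((false :: z) ++ [false])).count [] = 0 := by
  rw [lastG_concat, count_map_concat]; simp

lemma count_nil_headG (b : Bool) (z : List Bool) : (headG (b :: z)).count [] = 0 := by
  show ((gappedSubseqs 2 z.tail).map (b :: ·)).count [] = 0
  exact count_map_cons_nil _ _

theorem key_main (k : ℕ) (hk : 2 ≤ k) (x y : List Bool) (hx0 : x ≠ []) (hy0 : y ≠ [])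
    (hBc : ∀ w : List Bool, w.length ≤ k - 1 →
      (gappedSubseqs 2 x).count w = (gappedSubseqs 2 y).count w)
    (hLc : ∀ w : List Bool, w.length ≤ k - 1 →
      (gappedSubseqs 2 x.tail).count w = (gappedSubseqs 2 y.tail).count w)
    (hRc : ∀ w : List Bool, w.length ≤ k - 1 →
      (gappedSubseqs 2 x.dropLast).count w = (gappedSubseqs 2 y.dropLast).count w)
    (hLRc : ∀ w : List Bool, w.length ≤ k - 1 →
      (gappedSubseqs 2 x.tail.dropLast).count w = (gappedSubseqs 2 y.tail.dropLast).count w)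
    (w : List Bool) (hw : w.length ≤ k) :
    (gappedSubseqs 2 (((false :: x) ++ [false]) ++ (false :: y))).count w =
      (gappedSubseqs 2 (((false :: y) ++ [false]) ++ (false :: x))).count w := by
  have s1 := congrArg (Multiset.count w) (split_g2 ((false :: x) ++ [false]) (false :: y))
  have s2 := congrArg (Multiset.count w) (split_g2 ((false :: y) ++ [false]) (false :: x))
  rw [Multiset.count_add] at s1 s2
  have hB2 : (conv (lastG ((false :: x) ++ [false])) (headG (false :: y))).count w =
      (conv (lastG ((false :: y) ++ [false])) (headG (false :: x))).count w := by
    rw [count_conv, count_conv]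
    apply Finset.sum_congr rfl
    intro i hi
    rcases Nat.eq_zero_or_pos i with rfl | hipos
    · simp only [List.take_zero]
      rw [count_nil_lastG, count_nil_lastG]
      simp
    · by_cases him : i = w.length
      · subst him
        rw [List.drop_length, count_nil_headG, count_nil_headG]
        simp
      · have hi' : i < w.length :=
          lt_of_le_of_ne (Nat.lt_succ_iff.mp (Finset.mem_range.mp hi)) him
        rw [claimL k x y hx0 hy0 hRc hLRc (w.take i) (by simp [List.length_take]; omega),
          (claimH k x y hLc (w.drop i) (by simp [List.length_drop]; omega)).symm]
  have hA : (conv (gappedSubseqs 2 ((false :: x) ++ [false]))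
        (gappedSubseqs 2 (false :: y))).count w =
      (conv (gappedSubseqs 2 ((false :: y) ++ [false]))
        (gappedSubseqs 2 (false :: x))).count w := by
    rcases eq_or_ne w [] with rfl | hwne
    · rw [count_conv, count_conv]
      simp [count_nil_g2]
    · obtain ⟨m, hm'⟩ : ∃ m, w.length = m + 1 :=
        ⟨w.length - 1, by have := List.length_pos_iff.mpr hwne; omega⟩
      have expand : ∀ C D : Multiset (List Bool),
          (∑ i ∈ Finset.range (m + 1 + 1), C.count (w.take i) * D.count (w.drop i)) =
            C.count (w.take 0) * D.count (w.drop 0) +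
              (∑ i ∈ Finset.range m, C.count (w.take (i + 1)) * D.count (w.drop (i + 1))) +
              C.count (w.take (m + 1)) * D.count (w.drop (m + 1)) := by
        intro C D
        rw [Finset.sum_range_succ, Finset.sum_range_succ']
        ring
      rw [count_conv, count_conv, hm', expand, expand]
      have hmid : ∀ i ∈ Finset.range m,
          (gappedSubseqs 2 ((false :: x) ++ [false])).count (w.take (i + 1)) *
              (gappedSubseqs 2 (false :: y)).count (w.drop (i + 1)) =
            (gappedSubseqs 2 ((false :: y) ++ [false])).count (w.take (i + 1)) *
              (gappedSubseqs 2 (false :: x)).count (w.drop (i + 1)) := by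
        intro i hi
        have hi' := Finset.mem_range.mp hi
        rw [claimC k x y hx0 hy0 hBc hLc hRc hLRc (w.take (i + 1))
            (by simp [List.length_take]; omega),
          (claimD k x y hBc hLc (w.drop (i + 1))
            (by simp [List.length_drop]; omega)).symm]
      rw [Finset.sum_congr rfl hmid]
      simp only [List.take_zero, List.drop_zero]
      rw [← hm', List.take_length, List.drop_length]
      have hkey := keyC k x y hk hx0 hy0 hRc hLRc w hw
      simp only [count_nil_g2, one_mul, mul_one]
      omega
  omega


/-- Under the inductive hypotheses at level `k-1`,
`B^(k)((0,x,0,0,y)) = B^(k)((0,y,0,0,x))`. -/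
theorem stmt8 (k n : ℕ) (hk : 2 ≤ k) (x y : List Bool)
    (hx : x.length = n) (hy : y.length = n)
    (hB : Bdeck (k - 1) x = Bdeck (k - 1) y)
    (hL : BLdeck (k - 1) x = BLdeck (k - 1) y)
    (hR : BRdeck (k - 1) x = BRdeck (k - 1) y)
    (hLR : BLRdeck (k - 1) x = BLRdeck (k - 1) y) :
    Bdeck k ([false] ++ x ++ [false, false] ++ y) =
      Bdeck k ([false] ++ y ++ [false, false] ++ x) := by
  rcases eq_or_ne x [] with rfl | hx0
  · have hy0 : y = [] := by
      apply List.eq_nil_of_length_eq_zero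
      simp at hx; omega
    subst hy0; rfl
  · have hy0 : y ≠ [] := by
      intro h
      apply hx0
      apply List.eq_nil_of_length_eq_zero
      subst h; simp at hy; omega
    have hcount : ∀ u v : List Bool, Bdeck (k - 1) u = Bdeck (k - 1) v →
        ∀ w : List Bool, w.length ≤ k - 1 →
          (gappedSubseqs 2 u).count w = (gappedSubseqs 2 v).count w := by
      intro u v h w hw
      rcases eq_or_ne w [] with rfl | hne
      · rw [count_nil_g2, count_nil_g2]
      · have h1 : 1 ≤ w.length := List.length_pos_iff.mpr hne
        have h2 := congrArg (Multiset.count w) h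
        simp only [Bdeck, gDeck, Multiset.count_filter] at h2
        simpa [h1, hw] using h2
    have hgoal1 : [false] ++ x ++ [false, false] ++ y =
        ((false :: x) ++ [false]) ++ (false :: y) := by simp
    have hgoal2 : [false] ++ y ++ [false, false] ++ x =
        ((false :: y) ++ [false]) ++ (false :: x) := by simp
    rw [hgoal1, hgoal2]
    simp only [Bdeck, gDeck]
    refine Multiset.ext.mpr fun w => ?_
    rw [Multiset.count_filter, Multiset.count_filter]
    by_cases hp : 1 ≤ w.length ∧ w.length ≤ k
    · rw [if_pos hp, if_pos hp]
      exact key_main k hk x y hx0 hy0 (hcount x y hB) (hcount x.tail y.tail hL)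
        (hcount x.dropLast y.dropLast hR) (hcount x.tail.dropLast y.tail.dropLast hLR) w hp.2
    · rw [if_neg hp, if_neg hp]
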